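/- Let m, k ≥ 1 be integers, n ∈ ℕ, 0 < α ≤ 1 ≤ β. Suppose that for every set X of n points in ℝ^m there exists a map f : X → ℝ^k with α·‖x − x'‖ ≤ ‖f(x) − f(x')‖ ≤ β·‖x − x'‖ for all x, x' ∈ X (Euclidean norms). Then for every set P of n points of the form (z, x) with z > 0 and x ∈ ℝ^m, there exists a map g : P → (0,∞) × ℝ^k such that α·d_H(p, p') ≤ d_H(g(p), g(p')) ≤ β·d_H(p, p') for all p, p' ∈ P, where d_H((z,x),(z',x')) = arcosh(1 + (‖x − x'‖² + (z − z')²)/(2·z·z')). -/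

import Mathlib

/-!
Keep the heights and move the horizontal coordinates by the Euclidean map. Since
`cosh d_H - 1 = (‖x - x'‖² + (z - z')²) / (2 z z')`, a horizontal distortion by a factor in
`[α, β]` distorts `cosh d_H - 1` by a factor in `[α², β²]`. Convexity of `sinh` on `[0, ∞)`
gives `cosh (c t) - 1 ≤ c² (cosh t - 1)` for `0 ≤ c ≤ 1`, which turns this back into a
distortion of `d_H` itself by a factor in `[α, β]`.
-/

/-- The inverse hyperbolic cosine. -/
noncomputable def arcosh (x : ℝ) : ℝ := Real.log (x + Real.sqrt (x ^ 2 - 1))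

/-- The hyperbolic distance, in the Poincaré half-space model, between points
`(z, x)` and `(z', x')` with heights `z, z' > 0`. -/
noncomputable def dH {E : Type*} [NormedAddCommGroup E] (z : ℝ) (x : E) (z' : ℝ) (x' : E) : ℝ :=
  arcosh (1 + (‖x - x'‖ ^ 2 + (z - z') ^ 2) / (2 * z * z'))

namespace Real

lemma convexOn_sinh_Ici : ConvexOn ℝ (Set.Ici 0) sinh := by
  refine MonotoneOn.convexOn_of_deriv (convex_Ici 0) continuous_sinh.continuousOn
    differentiable_sinh.differentiableOn ?_
  rw [deriv_sinh]
  exact cosh_strictMonoOn.monotoneOn.mono interior_subset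

lemma sinh_mul_le_mul_sinh {c t : ℝ} (hc0 : 0 ≤ c) (hc1 : c ≤ 1) (ht : 0 ≤ t) :
    sinh (c * t) ≤ c * sinh t := by
  simpa using convexOn_sinh_Ici.2 (Set.mem_Ici.2 ht) Set.self_mem_Ici hc0 (sub_nonneg.2 hc1)
    (add_sub_cancel c 1)

lemma cosh_sub_one_eq (t : ℝ) : cosh t - 1 = 2 * sinh (t / 2) ^ 2 := by
  conv_lhs => rw [← mul_div_cancel₀ t two_ne_zero, cosh_two_mul, cosh_sq]
  ring

lemma cosh_mul_sub_one_le {c : ℝ} (hc0 : 0 ≤ c) (hc1 : c ≤ 1) (t : ℝ) :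
    cosh (c * t) - 1 ≤ c ^ 2 * (cosh t - 1) := by
  rw [← cosh_abs t, ← cosh_abs (c * t), abs_mul, abs_of_nonneg hc0, cosh_sub_one_eq,
    cosh_sub_one_eq, mul_div_assoc]
  have hsinh : 0 ≤ sinh (c * (|t| / 2)) := sinh_nonneg_iff.2 (by positivity)
  have hsq := pow_le_pow_left₀ hsinh (sinh_mul_le_mul_sinh hc0 hc1 (by positivity)) 2
  linarith [mul_pow c (sinh (|t| / 2)) 2]

lemma mul_arcosh_one_add_le {c u : ℝ} (hc0 : 0 ≤ c) (hc1 : c ≤ 1) (hu : 0 ≤ u) :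
    c * arcosh (1 + u) ≤ arcosh (1 + c ^ 2 * u) := by
  have hcosh : cosh (arcosh (1 + u)) = 1 + u := cosh_arcosh (by linarith)
  have hct : 0 ≤ c * arcosh (1 + u) := mul_nonneg hc0 (arcosh_nonneg (by linarith))
  have h := cosh_mul_sub_one_le hc0 hc1 (arcosh (1 + u))
  rw [hcosh] at h
  rw [← arcosh_cosh hct, arcosh_le_arcosh (cosh_pos _) (by positivity)]
  linarith

lemma arcosh_one_add_le_mul {c u : ℝ} (hc : 1 ≤ c) (hu : 0 ≤ u) :
    arcosh (1 + c ^ 2 * u) ≤ c * arcosh (1 + u) := by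
  have hc0 : 0 < c := by linarith
  have h := mul_arcosh_one_add_le (inv_nonneg.2 hc0.le) (inv_le_one_of_one_le₀ hc)
    (by positivity : 0 ≤ c ^ 2 * u)
  rwa [inv_pow, inv_mul_cancel_left₀ (by positivity), inv_mul_le_iff₀ hc0] at h

end Real

section HalfSpace

variable {E F : Type*} [NormedAddCommGroup E] [NormedAddCommGroup F]

lemma dH_eq_arcosh (z : ℝ) (x : E) (z' : ℝ) (x' : E) :
    dH z x z' x' = Real.arcosh (1 + (‖x - x'‖ ^ 2 + (z - z') ^ 2) / (2 * z * z')) :=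
  rfl

lemma mul_dH_le_dH {c z z' : ℝ} {x x' : E} {y y' : F} (hc0 : 0 ≤ c) (hc1 : c ≤ 1)
    (hz : 0 < z) (hz' : 0 < z') (h : c * ‖x - x'‖ ≤ ‖y - y'‖) :
    c * dH z x z' x' ≤ dH z y z' y' := by
  rw [dH_eq_arcosh, dH_eq_arcosh]
  refine (Real.mul_arcosh_one_add_le hc0 hc1 (by positivity)).trans ?_
  rw [Real.arcosh_le_arcosh (by positivity) (by positivity), ← mul_div_assoc]
  gcongr
  have hsq := pow_le_pow_left₀ (by positivity) h 2
  have hc2 : c ^ 2 ≤ 1 := pow_le_one₀ hc0 hc1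
  nlinarith [mul_pow c ‖x - x'‖ 2, sq_nonneg (z - z')]

lemma dH_le_mul_dH {c z z' : ℝ} {x x' : E} {y y' : F} (hc : 1 ≤ c)
    (hz : 0 < z) (hz' : 0 < z') (h : ‖y - y'‖ ≤ c * ‖x - x'‖) :
    dH z y z' y' ≤ c * dH z x z' x' := by
  rw [dH_eq_arcosh, dH_eq_arcosh]
  refine le_trans ?_ (Real.arcosh_one_add_le_mul hc (by positivity))
  rw [Real.arcosh_le_arcosh (by positivity) (by positivity), ← mul_div_assoc]
  gcongr
  have hsq := pow_le_pow_left₀ (norm_nonneg _) h 2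
  have hc2 : 1 ≤ c ^ 2 := one_le_pow₀ hc
  nlinarith [mul_pow c ‖x - x'‖ 2, sq_nonneg (z - z')]

end HalfSpace

theorem hyperbolic_dimension_reduction_general (m k : ℕ)
    (n : ℕ) (α β : ℝ) (hα0 : 0 < α) (hα1 : α ≤ 1) (hβ : 1 ≤ β)
    (heuclid : ∀ x : Fin n → EuclideanSpace ℝ (Fin m),
      ∃ f : Fin n → EuclideanSpace ℝ (Fin k),
        ∀ i j, α * ‖x i - x j‖ ≤ ‖f i - f j‖ ∧ ‖f i - f j‖ ≤ β * ‖x i - x j‖) :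
    ∀ p : Fin n → ℝ × EuclideanSpace ℝ (Fin m), (∀ i, 0 < (p i).1) →
      ∃ g : Fin n → ℝ × EuclideanSpace ℝ (Fin k), (∀ i, 0 < (g i).1) ∧
        ∀ i j,
          α * dH (p i).1 (p i).2 (p j).1 (p j).2 ≤
            dH (g i).1 (g i).2 (g j).1 (g j).2 ∧
          dH (g i).1 (g i).2 (g j).1 (g j).2 ≤
            β * dH (p i).1 (p i).2 (p j).1 (p j).2 := by
  intro p hp
  obtain ⟨f, hf⟩ := heuclid fun i => (p i).2
  refine ⟨fun i => ((p i).1, f i), hp, fun i j => ⟨?_, ?_⟩⟩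
  · exact mul_dH_le_dH hα0.le hα1 (hp i) (hp j) (hf i j).1
  · exact dH_le_mul_dH hβ (hp i) (hp j) (hf i j).2

/-- Theorem 1.5: an `(α, β)`-approximate Euclidean dimension reduction from
dimension `m` to dimension `k` (for `n`-point sets) yields an `(α, β)`-approximate
hyperbolic dimension reduction from dimension `m + 1` to dimension `k + 1`. -/
theorem hyperbolic_dimension_reduction (m k : ℕ) (hm : 1 ≤ m) (hk : 1 ≤ k)
    (n : ℕ) (α β : ℝ) (hα0 : 0 < α) (hα1 : α ≤ 1) (hβ : 1 ≤ β)
    (heuclid : ∀ x : Fin n → EuclideanSpace ℝ (Fin m),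
      ∃ f : Fin n → EuclideanSpace ℝ (Fin k),
        ∀ i j, α * ‖x i - x j‖ ≤ ‖f i - f j‖ ∧ ‖f i - f j‖ ≤ β * ‖x i - x j‖) :
    ∀ p : Fin n → ℝ × EuclideanSpace ℝ (Fin m), (∀ i, 0 < (p i).1) →
      ∃ g : Fin n → ℝ × EuclideanSpace ℝ (Fin k), (∀ i, 0 < (g i).1) ∧
        ∀ i j,
          α * dH (p i).1 (p i).2 (p j).1 (p j).2 ≤
            dH (g i).1 (g i).2 (g j).1 (g j).2 ∧
          dH (g i).1 (g i).2 (g j).1 (g j).2 ≤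
            β * dH (p i).1 (p i).2 (p j).1 (p j).2 :=
  hyperbolic_dimension_reduction_general m k n α β hα0 hα1 hβ heuclid
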